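/- If π ∈ M(μ,ν) and π' ∈ M(ν,ρ) are Lipschitz-Markov martingale couplings, then their Markovian composition π ∘ π' ∈ M(μ,ρ) (obtained by composing the disintegration kernels) is again a Lipschitz-Markov martingale coupling. -/

import Mathlib

open MeasureTheory ProbabilityTheory

/-- A disintegration kernel `κ` of a martingale coupling of `μ` with a second marginal
is Lipschitz-Markov iff for every `1`-Lipschitz `f` the map `x ↦ ∫ f dκ_x` agrees
`μ`-a.e. with a `1`-Lipschitz function. -/
def LMKernel (μ : Measure ℝ) (κ : Kernel ℝ ℝ) : Prop :=
  ∀ f : ℝ → ℝ, LipschitzWith 1 f →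
    ∃ g : ℝ → ℝ, LipschitzWith 1 g ∧ ∀ᵐ x ∂μ, ∫ y, f y ∂(κ x) = g x

/-! Both conclusions about `κ' ∘ₖ κ` come from the disintegration formula
`∫ f d(κ' ∘ₖ κ)_x = ∫ (∫ f dκ'_y) dκ_x`, valid as soon as `f` is integrable against the composed
kernel. For a 1-Lipschitz `f` the inner integral is ν-a.e. a 1-Lipschitz `g'`, and the outer
integral of `g'` is μ-a.e. a 1-Lipschitz `g`; for `f = id` the two martingale identities chain.
Integrability of a Lipschitz `f` comes from the first moment of the marginal `ρ` of the
composition. -/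

theorem LipschitzWith.integrable_comp {α E F : Type*} [MeasurableSpace α] {μ : Measure α}
    [IsFiniteMeasure μ] [NormedAddCommGroup E] [NormedAddCommGroup F] {K : NNReal} {g : E → F}
    (hg : LipschitzWith K g) {f : α → E} (hf : Integrable f μ) :
    Integrable (fun x => g (f x)) μ := by
  refine ((integrable_const ‖g 0‖).add (hf.norm.const_mul K)).mono'
    (hg.continuous.comp_aestronglyMeasurable hf.1) (ae_of_all _ fun x => ?_)
  calc ‖g (f x)‖ ≤ ‖g 0‖ + ‖g (f x) - g 0‖ := norm_le_norm_add_norm_sub' _ _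
    _ ≤ ‖g 0‖ + K * ‖f x‖ := by
      simpa [dist_eq_norm] using add_le_add_left (hg.dist_le_mul (f x) 0) ‖g 0‖

namespace ProbabilityTheory.Kernel

variable {α β γ : Type*} [MeasurableSpace α] [MeasurableSpace β] [MeasurableSpace γ]
  {μ : Measure α} {κ : Kernel α β} {η : Kernel β γ}

theorem ae_integral_comp_eq_of_ae {f : γ → ℝ} {g : β → ℝ}
    (hf : ∀ᵐ x ∂μ, Integrable f ((η ∘ₖ κ) x))
    (hfg : ∀ᵐ y ∂(κ ∘ₘ μ), ∫ z, f z ∂η y = g y) :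
    ∀ᵐ x ∂μ, ∫ z, f z ∂(η ∘ₖ κ) x = ∫ y, g y ∂κ x := by
  filter_upwards [hf, Measure.ae_ae_of_ae_comp hfg] with x hfx hfgx
  rw [integral_comp hfx, integral_congr_ae hfgx]

end ProbabilityTheory.Kernel

theorem ae_integral_id_comp_eq {μ : Measure ℝ} {κ η : Kernel ℝ ℝ}
    (hint : ∀ᵐ x ∂μ, Integrable id ((η ∘ₖ κ) x))
    (hκ : ∀ᵐ x ∂μ, ∫ y, y ∂κ x = x) (hη : ∀ᵐ y ∂(κ ∘ₘ μ), ∫ z, z ∂η y = y) :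
    ∀ᵐ x ∂μ, ∫ z, z ∂(η ∘ₖ κ) x = x := by
  filter_upwards [Kernel.ae_integral_comp_eq_of_ae hint hη, hκ] with x hcomp hx
  exact hcomp.trans hx

theorem LMKernel.comp {μ : Measure ℝ} {κ η : Kernel ℝ ℝ} [IsFiniteKernel κ] [IsFiniteKernel η]
    (hκ : LMKernel μ κ) (hη : LMKernel (κ ∘ₘ μ) η)
    (hint : ∀ᵐ x ∂μ, Integrable id ((η ∘ₖ κ) x)) :
    LMKernel μ (η ∘ₖ κ) := by
  intro f hf
  obtain ⟨g, hg, hfg⟩ := hη f hf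
  obtain ⟨h, hh, hgh⟩ := hκ g hg
  refine ⟨h, hh, ?_⟩
  have hfint : ∀ᵐ x ∂μ, Integrable f ((η ∘ₖ κ) x) := by
    filter_upwards [hint] with x hx using hf.integrable_comp hx
  filter_upwards [Kernel.ae_integral_comp_eq_of_ae hfint hfg, hgh] with x hcomp hx
  exact hcomp.trans hx

theorem composition_of_lipschitz_markov_kernels_general
    (μ ν ρ : Measure ℝ)
    (hρ : Integrable (fun x => |x|) ρ)
    (κ κ' : Kernel ℝ ℝ) [IsMarkovKernel κ] [IsMarkovKernel κ']
    (hκmarg : μ.bind (fun x => κ x) = ν) (hκ'marg : ν.bind (fun y => κ' y) = ρ)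
    (hκbary : ∀ᵐ x ∂μ, ∫ y, y ∂(κ x) = x) (hκ'bary : ∀ᵐ y ∂ν, ∫ z, z ∂(κ' y) = y)
    (hκLM : LMKernel μ κ) (hκ'LM : LMKernel ν κ') :
    μ.bind (fun x => (κ' ∘ₖ κ) x) = ρ ∧
    (∀ᵐ x ∂μ, ∫ z, z ∂((κ' ∘ₖ κ) x) = x) ∧
    LMKernel μ (κ' ∘ₖ κ) := by
  subst hκmarg hκ'marg
  have hint : ∀ᵐ x ∂μ, Integrable id ((κ' ∘ₖ κ) x) := by
    refine Measure.ae_integrable_of_integrable_comp ?_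
    rw [← Measure.comp_assoc]
    exact (integrable_norm_iff aestronglyMeasurable_id).mp (by simpa only [id, Real.norm_eq_abs])
  exact ⟨Measure.comp_assoc.symm, ae_integral_id_comp_eq hint hκbary hκ'bary, hκLM.comp hκ'LM hint⟩

/-- if `π ∈ M(μ,ν)` and `π' ∈ M(ν,ρ)` are Lipschitz-Markov martingale
couplings (with kernels `κ`, `κ'`), then their Markovian composition (the kernel
`x ↦ ∫ κ'_y dκ_x(y)`, i.e. `κ' ∘ₖ κ`) is again a Lipschitz-Markov martingale coupling
of `μ` and `ρ`. -/
theorem composition_of_lipschitz_markov_kernels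
    (μ ν ρ : Measure ℝ) [IsProbabilityMeasure μ] [IsProbabilityMeasure ν]
    [IsProbabilityMeasure ρ]
    (hμ : Integrable (fun x => |x|) μ) (hν : Integrable (fun x => |x|) ν)
    (hρ : Integrable (fun x => |x|) ρ)
    (κ κ' : Kernel ℝ ℝ) [IsMarkovKernel κ] [IsMarkovKernel κ']
    (hκmarg : μ.bind (fun x => κ x) = ν) (hκ'marg : ν.bind (fun y => κ' y) = ρ)
    (hκbary : ∀ᵐ x ∂μ, ∫ y, y ∂(κ x) = x) (hκ'bary : ∀ᵐ y ∂ν, ∫ z, z ∂(κ' y) = y)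
    (hκint : ∀ᵐ x ∂μ, Integrable (fun y => |y|) (κ x))
    (hκ'int : ∀ᵐ y ∂ν, Integrable (fun z => |z|) (κ' y))
    (hκLM : LMKernel μ κ) (hκ'LM : LMKernel ν κ') :
    μ.bind (fun x => (κ' ∘ₖ κ) x) = ρ ∧
    (∀ᵐ x ∂μ, ∫ z, z ∂((κ' ∘ₖ κ) x) = x) ∧
    LMKernel μ (κ' ∘ₖ κ) :=
  composition_of_lipschitz_markov_kernels_general μ ν ρ hρ κ κ' hκmarg hκ'marg hκbary hκ'bary hκLM
    hκ'LM
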